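/- For u, v > 0, define K(u,v) = (LW₀(v/u) + 1)^{−1/2} and ψ(u,v) = v/LW₀(v/u) + v·ln(v/LW₀(v/u)) − (u + v). Then K solves the transport equation ∂K/∂v + (1/2)·(∂²ψ/∂v²)·K − u·exp(−∂ψ/∂v)·∂K/∂u = 0 on (0,∞)²; explicitly, with w = LW₀(v/u), ∂K/∂v + (w/(2v(w+1)))·K − (u·w/v)·∂K/∂u = 0. Moreover, for every fixed u > 0, K(u,v) → 1 as v → 0⁺. -/

import Mathlib

/-!
`LW₀` is the inverse of the strictly increasing map `w ↦ w eʷ` on `[0, ∞)`, so it is continuous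
and, by the inverse function rule, `LW₀'(z) = w / (z (w + 1))` with `w = LW₀ z` (using `eʷ = z / w`).
Hence `z ↦ (LW₀ z + 1)ᵖ` has logarithmic derivative `p w / (z (w + 1)²)`, and by the chain rule
`∂K/∂v = -w K / (2 v (w + 1)²)` and `∂K/∂u = w K / (2 u (w + 1)²)`; the transport equation is then
the identity `-1/(w + 1) + 1 - w/(w + 1) = 0`. The boundary value follows from `0 ≤ LW₀ z ≤ z`.
-/

/-- The principal branch of the Lambert W function on the nonnegative reals:
for `z ≥ 0`, `LW0 z` is the unique `w ≥ 0` with `w·exp w = z`. -/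
noncomputable def LW0 (z : ℝ) : ℝ :=
  Function.invFunOn (fun w => w * Real.exp w) (Set.Ici 0) z

/-- The amplitude `K(u,v) = (LW₀(v/u) + 1)^{-1/2}`. -/
noncomputable def Kamp (u v : ℝ) : ℝ :=
  (LW0 (v / u) + 1) ^ (-(1 : ℝ) / 2)

open Real Set Filter Topology

lemma strictMonoOn_mul_exp : StrictMonoOn (fun w : ℝ => w * exp w) (Ici 0) := by
  intro a ha b _ hab
  calc a * exp a ≤ a * exp b := mul_le_mul_of_nonneg_left (exp_le_exp.2 hab.le) ha
    _ < b * exp b := mul_lt_mul_of_pos_right hab (exp_pos b)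

lemma exists_mul_exp_eq {z : ℝ} (hz : 0 ≤ z) : ∃ w ∈ Ici (0 : ℝ), w * exp w = z := by
  have hmem : z ∈ Icc ((fun w : ℝ => w * exp w) 0) ((fun w => w * exp w) z) :=
    ⟨by simpa using hz, by simpa using le_mul_of_one_le_right hz (one_le_exp hz)⟩
  obtain ⟨w, hw, hfw⟩ :=
    intermediate_value_Icc hz (by fun_prop : Continuous fun w : ℝ => w * exp w).continuousOn hmem
  exact ⟨w, hw.1, hfw⟩

lemma LW0_nonneg {z : ℝ} (hz : 0 ≤ z) : 0 ≤ LW0 z :=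
  Function.invFunOn_mem (exists_mul_exp_eq hz)

lemma LW0_mul_exp {z : ℝ} (hz : 0 ≤ z) : LW0 z * exp (LW0 z) = z :=
  Function.invFunOn_eq (exists_mul_exp_eq hz)

lemma LW0_mul_exp_self {w : ℝ} (hw : 0 ≤ w) : LW0 (w * exp w) = w :=
  strictMonoOn_mul_exp.injOn.leftInvOn_invFunOn hw

lemma LW0_pos {z : ℝ} (hz : 0 < z) : 0 < LW0 z := by
  refine (LW0_nonneg hz.le).lt_of_ne fun h => hz.ne ?_
  rw [← LW0_mul_exp hz.le, ← h, zero_mul]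

lemma LW0_le_self {z : ℝ} (hz : 0 ≤ z) : LW0 z ≤ z :=
  calc LW0 z ≤ LW0 z * exp (LW0 z) :=
        le_mul_of_one_le_right (LW0_nonneg hz) (one_le_exp (LW0_nonneg hz))
    _ = z := LW0_mul_exp hz

lemma strictMonoOn_LW0 : StrictMonoOn LW0 (Ici 0) := by
  intro a ha b hb hab
  rw [← strictMonoOn_mul_exp.lt_iff_lt (LW0_nonneg ha) (LW0_nonneg hb)]
  simpa only [LW0_mul_exp ha, LW0_mul_exp hb] using hab

lemma continuousAt_LW0 {z : ℝ} (hz : 0 < z) : ContinuousAt LW0 z := by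
  refine (strictMonoOn_LW0.mono Ioi_subset_Ici_self).continuousAt_of_image_mem_nhds
    (Ioi_mem_nhds hz) (mem_of_superset (Ioi_mem_nhds (LW0_pos hz)) fun w (hw : 0 < w) => ?_)
  exact ⟨w * exp w, mul_pos hw (exp_pos w), LW0_mul_exp_self hw.le⟩

lemma tendsto_LW0_nhdsGE_zero : Tendsto LW0 (𝓝[≥] 0) (𝓝 0) := by
  refine tendsto_of_tendsto_of_tendsto_of_le_of_le' tendsto_const_nhds
    (tendsto_nhdsWithin_of_tendsto_nhds tendsto_id) ?_ ?_
  · filter_upwards [self_mem_nhdsWithin] with z hz using LW0_nonneg hz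
  · filter_upwards [self_mem_nhdsWithin] with z hz using LW0_le_self hz

lemma hasDerivAt_LW0 {z : ℝ} (hz : 0 < z) : HasDerivAt LW0 (LW0 z / (z * (LW0 z + 1))) z := by
  have hw : 0 < LW0 z := LW0_pos hz
  have hf : HasDerivAt (fun w => w * exp w) ((LW0 z + 1) * exp (LW0 z)) (LW0 z) :=
    ((hasDerivAt_id' _).mul (hasDerivAt_exp _)).congr_deriv (by ring)
  refine (hf.of_local_left_inverse (continuousAt_LW0 hz) (by positivity)
    (by filter_upwards [eventually_gt_nhds hz] with y hy using LW0_mul_exp hy.le)).congr_deriv ?_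
  field_simp
  exact (LW0_mul_exp hz.le).symm

lemma hasDerivAt_LW0_add_one_rpow (p : ℝ) {z : ℝ} (hz : 0 < z) :
    HasDerivAt (fun z => (LW0 z + 1) ^ p)
      (p * LW0 z / (z * (LW0 z + 1) ^ 2) * (LW0 z + 1) ^ p) z := by
  have hw1 : 0 < LW0 z + 1 := by linarith [LW0_pos hz]
  refine (((hasDerivAt_LW0 hz).add_const 1).rpow_const (p := p) (Or.inl hw1.ne')).congr_deriv ?_
  rw [rpow_sub_one hw1.ne']
  field_simp

lemma hasDerivAt_Kamp_right {u v : ℝ} (hu : 0 < u) (hv : 0 < v) :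
    HasDerivAt (fun v' => Kamp u v')
      (-LW0 (v / u) / (2 * v * (LW0 (v / u) + 1) ^ 2) * Kamp u v) v := by
  refine ((hasDerivAt_LW0_add_one_rpow (-(1 : ℝ) / 2) (div_pos hv hu)).comp v
    ((hasDerivAt_id v).div_const u)).congr_deriv ?_
  unfold Kamp
  field_simp

lemma hasDerivAt_Kamp_left {u v : ℝ} (hu : 0 < u) (hv : 0 < v) :
    HasDerivAt (fun u' => Kamp u' v)
      (LW0 (v / u) / (2 * u * (LW0 (v / u) + 1) ^ 2) * Kamp u v) u := by
  refine ((hasDerivAt_LW0_add_one_rpow (-(1 : ℝ) / 2) (div_pos hv hu)).comp u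
    ((hasDerivAt_inv hu.ne').const_mul v)).congr_deriv ?_
  unfold Kamp
  field_simp

lemma tendsto_Kamp_nhdsGT_zero {u : ℝ} (hu : 0 < u) :
    Tendsto (fun v => Kamp u v) (𝓝[>] 0) (𝓝 1) := by
  have hquot : Tendsto (fun v => v / u) (𝓝[>] 0) (𝓝[≥] 0) :=
    tendsto_nhdsWithin_iff.2
      ⟨((continuous_id.div_const u).tendsto' 0 0 (zero_div u)).mono_left nhdsWithin_le_nhds,
        by filter_upwards [self_mem_nhdsWithin] with v (hv : 0 < v) using (div_pos hv hu).le⟩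
  have h := (continuousAt_rpow_const (0 + 1) (-(1 : ℝ) / 2) (by norm_num)).tendsto.comp
    ((tendsto_LW0_nhdsGE_zero.comp hquot).add_const 1)
  rwa [zero_add, one_rpow] at h

/-- `K` solves the transport equation
`∂K/∂v + (w/(2v(w+1)))·K − (u·w/v)·∂K/∂u = 0` with `w = LW₀(v/u)`,
and `K(u,v) → 1` as `v → 0⁺` for every fixed `u > 0`. -/
theorem K_solves_transport (u v : ℝ) (hu : 0 < u) (hv : 0 < v) :
    DifferentiableAt ℝ (fun v' => Kamp u v') v ∧
    DifferentiableAt ℝ (fun u' => Kamp u' v) u ∧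
    deriv (fun v' => Kamp u v') v
      + LW0 (v / u) / (2 * v * (LW0 (v / u) + 1)) * Kamp u v
      - u * LW0 (v / u) / v * deriv (fun u' => Kamp u' v) u = 0 ∧
    Filter.Tendsto (fun v' => Kamp u v') (nhdsWithin 0 (Set.Ioi 0)) (nhds 1) := by
  have hKv := hasDerivAt_Kamp_right hu hv
  have hKu := hasDerivAt_Kamp_left hu hv
  refine ⟨hKv.differentiableAt, hKu.differentiableAt, ?_, tendsto_Kamp_nhdsGT_zero hu⟩
  rw [hKv.deriv, hKu.deriv]
  have hw1 : LW0 (v / u) + 1 ≠ 0 := by linarith [LW0_pos (div_pos hv hu)]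
  field_simp
  ring
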